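/- arXiv:2104.02169 — 3 statements merged into one kernel-verified Lean document; each statement's English description precedes it below -/
import Mathlib

section
/- Hydrodynamic moments of the transport term of the first Hilbert correction: let ρ, θ : U → ℝ and u : U → ℝ³ be differentiable at a point x of an open set U ⊂ ℝ³, and let f₁(x,v) = (ρ(x) + u(x)·v + θ(x)(|v|²−3)/2) √μ(v). Then (i) ∫_{ℝ³} (v·∇ₓ f₁)(x,v) √μ(v) dv = (∇·u)(x); (ii) ∫_{ℝ³} (v·∇ₓ f₁)(x,v) v_i √μ(v) dv = ∂_{x_i}(ρ + θ)(x) for each i = 1,2,3; (iii) ∫_{ℝ³} (v·∇ₓ f₁)(x,v) (|v|²/2) √μ(v) dv = (5/2)(∇·u)(x). -/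
open MeasureTheory Real
open scoped RealInnerProductSpace

noncomputable section

/-- The global Maxwellian `μ(v) = (2π)^{−3/2} e^{−|v|²/2}`. -/
def globalMaxwellian (v : EuclideanSpace ℝ (Fin 3)) : ℝ :=
  (2 * Real.pi) ^ (-(3 : ℝ) / 2) * Real.exp (-‖v‖ ^ 2 / 2)

/-- The first-order Hilbert correction
`f₁(x,v) = (ρ(x) + u(x)·v + θ(x)(|v|²−3)/2) √μ(v)`. -/
def hilbertFirst (ρ θ : EuclideanSpace ℝ (Fin 3) → ℝ)
    (u : EuclideanSpace ℝ (Fin 3) → EuclideanSpace ℝ (Fin 3))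
    (x v : EuclideanSpace ℝ (Fin 3)) : ℝ :=
  (ρ x + ⟪u x, v⟫ + θ x * (‖v‖ ^ 2 - 3) / 2) * Real.sqrt (globalMaxwellian v)

/-!
Since `f₁` is affine in `(ρ, u, θ)`, `v·∇ₓf₁ = P(v) √μ(v)` with
`P(v) = Dρ v + ⟪Du v, v⟫ + Dθ v (|v|² − 3)/2`, so every moment in the theorem is a Gaussian
integral `∫ P w μ` of a polynomial. The odd part of `P w` integrates to zero, and the even part
only involves the isotropic second moments `∫ vᵢvⱼ μ = δᵢⱼ` and `∫ vᵢvⱼ|v|² μ = 5δᵢⱼ`, both of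
which follow from Gaussian integration by parts `∫ vᵢ F μ = ∫ ∂ᵢF μ`. All integrands are
functions of temperate growth times `μ`, hence integrable.
-/

open Module

section TemperateGrowth

variable {D V : Type*} [NormedAddCommGroup D] [NormedSpace ℝ D] [NormedAddCommGroup V]
  [InnerProductSpace ℝ V]

@[fun_prop]
theorem Function.HasTemperateGrowth.inner {f g : D → V} (hf : f.HasTemperateGrowth)
    (hg : g.HasTemperateGrowth) : (fun x => ⟪f x, g x⟫).HasTemperateGrowth :=
  (innerSL ℝ).bilinear_hasTemperateGrowth hf hg

@[fun_prop]
theorem Function.HasTemperateGrowth.div_const {f : D → ℝ} (hf : f.HasTemperateGrowth) (c : ℝ) :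
    (fun x => f x / c).HasTemperateGrowth := by
  simp_rw [div_eq_mul_inv]; fun_prop

end TemperateGrowth

theorem integral_eq_zero_of_odd {G : Type*} [MeasurableSpace G] [AddGroup G] [MeasurableNeg G]
    {μ : Measure G} [μ.IsNegInvariant] {f : G → ℝ} (hf : ∀ x, f (-x) = -f x) :
    ∫ x, f x ∂μ = 0 := by
  have h := integral_neg_eq_self f μ
  simp only [hf, integral_neg] at h
  linarith

theorem pow_one_add_mul_exp_neg_sq_div_two_le (k : ℕ) {t : ℝ} (ht : 0 ≤ t) :
    (1 + t) ^ k * rexp (-t ^ 2 / 2) ≤ k.factorial * rexp 2 * rexp (-(1 / 4) * t ^ 2) := by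
  have hpow : (1 + t) ^ k ≤ k.factorial * rexp (1 + t) := by
    have := Real.pow_div_factorial_le_exp (1 + t) (by linarith) k
    rwa [div_le_iff₀ (by positivity), mul_comm] at this
  calc (1 + t) ^ k * rexp (-t ^ 2 / 2)
      ≤ k.factorial * rexp (2 + t ^ 2 / 4) * rexp (-t ^ 2 / 2) := by
        refine mul_le_mul_of_nonneg_right (hpow.trans ?_) (exp_pos _).le
        exact mul_le_mul_of_nonneg_left (exp_le_exp.2 (by nlinarith [sq_nonneg (t - 2)]))
          (by positivity)
    _ = k.factorial * rexp 2 * rexp (-(1 / 4) * t ^ 2) := by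
        rw [mul_assoc, ← exp_add, mul_assoc, ← exp_add]; ring_nf

section StdGaussian

variable {V : Type*} [NormedAddCommGroup V] [InnerProductSpace ℝ V]

def stdGaussianDensity (v : V) : ℝ :=
  (2 * π) ^ (-(finrank ℝ V : ℝ) / 2) * rexp (-‖v‖ ^ 2 / 2)

theorem stdGaussianDensity_neg (v : V) : stdGaussianDensity (-v) = stdGaussianDensity v := by
  simp [stdGaussianDensity]

theorem stdGaussianDensity_nonneg (v : V) : 0 ≤ stdGaussianDensity v := by
  unfold stdGaussianDensity; positivity

theorem hasFDerivAt_stdGaussianDensity (v : V) :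
    HasFDerivAt stdGaussianDensity (-stdGaussianDensity v • innerSL ℝ v) v := by
  have h : HasFDerivAt (fun v : V => -‖v‖ ^ 2 / 2) (-innerSL ℝ v) v := by
    have e : (fun v : V => -‖v‖ ^ 2 / 2) = fun v => -1 / 2 * ‖v‖ ^ 2 := by funext; ring
    rw [e]
    refine ((hasFDerivAt_id v).norm_sq.const_mul (-1 / 2 : ℝ)).congr_fderiv ?_
    ext; simp; ring
  refine ((h.exp).const_mul ((2 * π) ^ (-(finrank ℝ V : ℝ) / 2))).congr_fderiv ?_
  ext a
  simp [stdGaussianDensity]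
  ring

theorem fderiv_stdGaussianDensity_apply (v a : V) :
    fderiv ℝ stdGaussianDensity v a = -⟪v, a⟫ * stdGaussianDensity v := by
  rw [(hasFDerivAt_stdGaussianDensity v).fderiv]
  simp [mul_comm]

variable [FiniteDimensional ℝ V] [MeasurableSpace V] [BorelSpace V]

theorem integral_stdGaussianDensity : ∫ v : V, stdGaussianDensity v = 1 := by
  have h := GaussianFourier.integral_rexp_neg_mul_sq_norm (V := V) (b := 1 / 2) (by norm_num)
  simp only [stdGaussianDensity, integral_const_mul]
  simp only [show ∀ v : V, -‖v‖ ^ 2 / 2 = -(1 / 2) * ‖v‖ ^ 2 from fun v => by ring, h]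
  rw [show π / (1 / 2) = 2 * π by ring, ← Real.rpow_add (by positivity), neg_div, neg_add_cancel,
    Real.rpow_zero]

theorem integrable_exp_neg_mul_sq_norm {b : ℝ} (hb : 0 < b) :
    Integrable (fun v : V => rexp (-b * ‖v‖ ^ 2)) := by
  have := (GaussianFourier.integrable_cexp_neg_mul_sq_norm_add (V := V) (b := (b : ℂ))
    (by simpa) 0 0).norm
  simpa [Complex.norm_exp, ← Complex.ofReal_pow] using this

theorem integrable_mul_stdGaussianDensity_of_le {f : V → ℝ} (hf : AEStronglyMeasurable f)
    {C : ℝ} {k : ℕ} (hfC : ∀ v, ‖f v‖ ≤ C * (1 + ‖v‖) ^ k) :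
    Integrable (fun v => f v * stdGaussianDensity v) := by
  have hC : 0 ≤ C := by simpa using (norm_nonneg _).trans (hfC 0)
  set c := (2 * π) ^ (-(finrank ℝ V : ℝ) / 2)
  refine ((integrable_exp_neg_mul_sq_norm (V := V) (b := 1 / 4) (by norm_num)).const_mul
    (C * c * (k.factorial * rexp 2))).mono'
    (hf.mul (by unfold stdGaussianDensity; fun_prop)) (ae_of_all _ fun v => ?_)
  calc ‖f v * stdGaussianDensity v‖ = ‖f v‖ * stdGaussianDensity v := by
        rw [norm_mul, Real.norm_of_nonneg (stdGaussianDensity_nonneg v)]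
    _ ≤ C * (1 + ‖v‖) ^ k * stdGaussianDensity v := by
        gcongr; exacts [stdGaussianDensity_nonneg v, hfC v]
    _ = C * c * ((1 + ‖v‖) ^ k * rexp (-‖v‖ ^ 2 / 2)) := by
        unfold stdGaussianDensity; ring
    _ ≤ C * c * (k.factorial * rexp 2 * rexp (-(1 / 4) * ‖v‖ ^ 2)) := by
        exact mul_le_mul_of_nonneg_left
          (pow_one_add_mul_exp_neg_sq_div_two_le k (norm_nonneg v)) (by positivity)
    _ = _ := by ring

theorem Function.HasTemperateGrowth.integrable_mul_stdGaussianDensity {f : V → ℝ}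
    (hf : f.HasTemperateGrowth) : Integrable (fun v => f v * stdGaussianDensity v) := by
  obtain ⟨k, C, h⟩ := hf.2 0
  exact integrable_mul_stdGaussianDensity_of_le hf.1.continuous.aestronglyMeasurable
    (fun v => by simpa using h v)

theorem integral_inner_mul_mul_stdGaussianDensity {F : V → ℝ} (hF : F.HasTemperateGrowth)
    (a : V) :
    ∫ v, ⟪a, v⟫ * F v * stdGaussianDensity v = ∫ v, fderiv ℝ F v a * stdGaussianDensity v := by
  have hF' : Integrable (fun v => fderiv ℝ F v a * stdGaussianDensity v) := by
    obtain ⟨k, C, h⟩ := hF.2 1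
    refine integrable_mul_stdGaussianDensity_of_le (C := C * ‖a‖) (k := k)
      ((hF.1.continuous_fderiv (by simp)).clm_apply continuous_const).aestronglyMeasurable
      fun v => ?_
    calc ‖fderiv ℝ F v a‖ ≤ ‖fderiv ℝ F v‖ * ‖a‖ := (fderiv ℝ F v).le_opNorm a
      _ ≤ C * (1 + ‖v‖) ^ k * ‖a‖ := by gcongr; simpa using h v
      _ = C * ‖a‖ * (1 + ‖v‖) ^ k := by ring
  have hgauss : (fun v => F v * fderiv ℝ stdGaussianDensity v a) =
      fun v => -(⟪a, v⟫ * F v * stdGaussianDensity v) := by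
    funext v; rw [fderiv_stdGaussianDensity_apply, real_inner_comm]; ring
  have hibp := integral_mul_fderiv_eq_neg_fderiv_mul_of_integrable hF'
    (by rw [hgauss]; exact (by fun_prop : Function.HasTemperateGrowth
      (fun v => ⟪a, v⟫ * F v)).integrable_mul_stdGaussianDensity.neg)
    hF.integrable_mul_stdGaussianDensity
    (fun v _ => hF.1.differentiable (by simp) v)
    (fun v _ => (hasFDerivAt_stdGaussianDensity v).differentiableAt)
  rw [hgauss, integral_neg] at hibp
  exact neg_inj.mp hibp

theorem integral_inner_mul_inner_mul_stdGaussianDensity (a b : V) :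
    ∫ v, ⟪a, v⟫ * ⟪b, v⟫ * stdGaussianDensity v = ⟪a, b⟫ := by
  rw [integral_inner_mul_mul_stdGaussianDensity (by fun_prop) a]
  have hderiv : ∀ v, fderiv ℝ (fun v => ⟪b, v⟫) v a = ⟪a, b⟫ := fun v => by
    have h : HasFDerivAt (fun v => ⟪b, v⟫) _ v := (innerSL ℝ b).hasFDerivAt
    rw [h.fderiv]
    simp [real_inner_comm]
  simp [hderiv, integral_const_mul, integral_stdGaussianDensity]

theorem integral_norm_sq_mul_stdGaussianDensity :
    ∫ v : V, ‖v‖ ^ 2 * stdGaussianDensity v = finrank ℝ V := by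
  let b := stdOrthonormalBasis ℝ V
  have hnorm : ∀ v : V, ‖v‖ ^ 2 * stdGaussianDensity v =
      ∑ i, ⟪b i, v⟫ * ⟪b i, v⟫ * stdGaussianDensity v := fun v => by
    rw [← Finset.sum_mul, ← real_inner_self_eq_norm_sq, ← b.sum_inner_mul_inner v v]
    simp_rw [real_inner_comm v]
  simp_rw [hnorm]
  rw [integral_finsetSum _ fun i _ =>
    (by fun_prop : Function.HasTemperateGrowth _).integrable_mul_stdGaussianDensity]
  simp [integral_inner_mul_inner_mul_stdGaussianDensity, b.orthonormal.1]

theorem integral_inner_mul_inner_mul_norm_sq_mul_stdGaussianDensity (a b : V) :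
    ∫ v, ⟪a, v⟫ * ⟪b, v⟫ * (‖v‖ ^ 2 * stdGaussianDensity v) = (finrank ℝ V + 2) * ⟪a, b⟫ := by
  have hderiv : ∀ v, fderiv ℝ (fun v => ⟪b, v⟫ * ‖v‖ ^ 2) v a =
      ⟪a, b⟫ * ‖v‖ ^ 2 + 2 * (⟪a, v⟫ * ⟪b, v⟫) := fun v => by
    have h : HasFDerivAt (fun v => ⟪b, v⟫ * ‖v‖ ^ 2) _ v :=
      (innerSL ℝ b).hasFDerivAt.mul (hasFDerivAt_id v).norm_sq
    rw [h.fderiv]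
    simp [real_inner_comm]
    ring
  calc ∫ v, ⟪a, v⟫ * ⟪b, v⟫ * (‖v‖ ^ 2 * stdGaussianDensity v)
      = ∫ v, ⟪a, v⟫ * (⟪b, v⟫ * ‖v‖ ^ 2) * stdGaussianDensity v := by
        simp only [mul_assoc]
    _ = ∫ v, (⟪a, b⟫ * (‖v‖ ^ 2 * stdGaussianDensity v)
          + 2 * (⟪a, v⟫ * ⟪b, v⟫ * stdGaussianDensity v)) := by
        rw [integral_inner_mul_mul_stdGaussianDensity (by fun_prop) a]
        simp only [hderiv]; congr 1 with v; ring
    _ = (finrank ℝ V + 2) * ⟪a, b⟫ := by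
        rw [integral_add, integral_const_mul, integral_const_mul,
          integral_norm_sq_mul_stdGaussianDensity, integral_inner_mul_inner_mul_stdGaussianDensity]
        · ring
        · exact ((by fun_prop : Function.HasTemperateGrowth (fun v : V => ‖v‖ ^ 2))
            |>.integrable_mul_stdGaussianDensity).const_mul _
        · exact ((by fun_prop : Function.HasTemperateGrowth (fun v : V => ⟪a, v⟫ * ⟪b, v⟫))
            |>.integrable_mul_stdGaussianDensity).const_mul _

def HasIsotropicSecondMoments (W : V → ℝ) (c : ℝ) : Prop :=
  ∀ a b : V, Integrable (fun v => ⟪a, v⟫ * ⟪b, v⟫ * W v) ∧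
    ∫ v, ⟪a, v⟫ * ⟪b, v⟫ * W v = c * ⟪a, b⟫

namespace HasIsotropicSecondMoments

variable {W : V → ℝ} {c : ℝ} (hW : HasIsotropicSecondMoments W c)
include hW

theorem integrable_apply_mul_inner (ℓ : StrongDual ℝ V) (a : V) :
    Integrable (fun v => ℓ v * ⟪a, v⟫ * W v) := by
  simpa only [InnerProductSpace.toDual_symm_apply] using
    (hW ((InnerProductSpace.toDual ℝ V).symm ℓ) a).1

theorem integral_apply_mul_inner (ℓ : StrongDual ℝ V) (a : V) :
    ∫ v, ℓ v * ⟪a, v⟫ * W v = c * ℓ a := by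
  simpa only [InnerProductSpace.toDual_symm_apply] using
    (hW ((InnerProductSpace.toDual ℝ V).symm ℓ) a).2

theorem integral_inner_apply_self {ι : Type*} [Fintype ι] (b : OrthonormalBasis ι ℝ V)
    (A : V →L[ℝ] V) : ∫ v, ⟪A v, v⟫ * W v = c * ∑ i, ⟪b i, A (b i)⟫ := by
  have hexpand : ∀ v, ⟪A v, v⟫ * W v = ∑ i, (innerSL ℝ (b i) ∘L A) v * ⟪b i, v⟫ * W v :=
    fun v => by
      rw [← Finset.sum_mul, ← b.sum_inner_mul_inner]
      simp [real_inner_comm]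
  simp_rw [hexpand]
  rw [integral_finsetSum _ fun i _ => hW.integrable_apply_mul_inner _ _, Finset.mul_sum]
  exact Finset.sum_congr rfl fun i _ => hW.integral_apply_mul_inner _ _

end HasIsotropicSecondMoments

theorem hasIsotropicSecondMoments_stdGaussianDensity :
    HasIsotropicSecondMoments (stdGaussianDensity (V := V)) 1 := fun a b =>
  ⟨(by fun_prop : Function.HasTemperateGrowth (fun v : V => ⟪a, v⟫ * ⟪b, v⟫))
    |>.integrable_mul_stdGaussianDensity,
    by rw [integral_inner_mul_inner_mul_stdGaussianDensity, one_mul]⟩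

theorem hasIsotropicSecondMoments_norm_sq_mul_stdGaussianDensity :
    HasIsotropicSecondMoments (fun v : V => ‖v‖ ^ 2 * stdGaussianDensity v) (finrank ℝ V + 2) :=
  fun a b =>
  ⟨by simpa only [mul_assoc] using (by fun_prop : Function.HasTemperateGrowth
      (fun v : V => ⟪a, v⟫ * ⟪b, v⟫ * ‖v‖ ^ 2)).integrable_mul_stdGaussianDensity,
    integral_inner_mul_inner_mul_norm_sq_mul_stdGaussianDensity a b⟩

/-- `v·∇ₓf₁ = transportCoeff (Dρ) (Du) (Dθ) v · √μ(v)`; the `3` of `f₁` is the dimension. -/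
def transportCoeff (ℓ : StrongDual ℝ V) (A : V →L[ℝ] V) (τ : StrongDual ℝ V) (v : V) : ℝ :=
  ℓ v + ⟪A v, v⟫ + τ v * (‖v‖ ^ 2 - finrank ℝ V) / 2

variable (ℓ : StrongDual ℝ V) (A : V →L[ℝ] V) (τ : StrongDual ℝ V)

theorem integral_transportCoeff_mul_stdGaussianDensity {ι : Type*} [Fintype ι]
    (b : OrthonormalBasis ι ℝ V) :
    ∫ v, transportCoeff ℓ A τ v * stdGaussianDensity v = ∑ i, ⟪b i, A (b i)⟫ := by
  have hsplit : ∀ v, transportCoeff ℓ A τ v * stdGaussianDensity v = ⟪A v, v⟫ * stdGaussianDensity v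
      + (ℓ v + τ v * (‖v‖ ^ 2 - finrank ℝ V) / 2) * stdGaussianDensity v := fun v => by
    rw [transportCoeff]; ring
  have hodd : ∫ v, (ℓ v + τ v * (‖v‖ ^ 2 - finrank ℝ V) / 2) * stdGaussianDensity v = 0 :=
    integral_eq_zero_of_odd fun v => by simp [stdGaussianDensity_neg]; ring
  simp_rw [hsplit]
  rw [integral_add, hodd, add_zero,
    hasIsotropicSecondMoments_stdGaussianDensity.integral_inner_apply_self b, one_mul]
  · exact (by fun_prop : Function.HasTemperateGrowth
      (fun v => ⟪A v, v⟫)).integrable_mul_stdGaussianDensity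
  · exact (by fun_prop : Function.HasTemperateGrowth
      (fun v => ℓ v + τ v * (‖v‖ ^ 2 - finrank ℝ V) / 2)).integrable_mul_stdGaussianDensity

theorem integral_transportCoeff_mul_inner_mul_stdGaussianDensity (a : V) :
    ∫ v, transportCoeff ℓ A τ v * (⟪a, v⟫ * stdGaussianDensity v) = ℓ a + τ a := by
  have hφ := hasIsotropicSecondMoments_stdGaussianDensity (V := V)
  have hφ₂ := hasIsotropicSecondMoments_norm_sq_mul_stdGaussianDensity (V := V)
  have hsplit : ∀ v, transportCoeff ℓ A τ v * (⟪a, v⟫ * stdGaussianDensity v) =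
      ℓ v * ⟪a, v⟫ * stdGaussianDensity v
        + (τ v * ⟪a, v⟫ * (‖v‖ ^ 2 * stdGaussianDensity v)
          - finrank ℝ V * (τ v * ⟪a, v⟫ * stdGaussianDensity v)) / 2
        + ⟪A v, v⟫ * ⟪a, v⟫ * stdGaussianDensity v := fun v => by
    rw [transportCoeff]; ring
  have hodd : ∫ v, ⟪A v, v⟫ * ⟪a, v⟫ * stdGaussianDensity v = 0 :=
    integral_eq_zero_of_odd fun v => by simp [stdGaussianDensity_neg]
  have hℓ := hφ.integrable_apply_mul_inner ℓ a
  have hτ := hφ.integrable_apply_mul_inner τ a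
  have hτ₂ := hφ₂.integrable_apply_mul_inner τ a
  have hτ' : Integrable (fun v => (τ v * ⟪a, v⟫ * (‖v‖ ^ 2 * stdGaussianDensity v)
      - finrank ℝ V * (τ v * ⟪a, v⟫ * stdGaussianDensity v)) / 2) :=
    (hτ₂.sub (hτ.const_mul _)).div_const 2
  have hA : Integrable (fun v => ⟪A v, v⟫ * ⟪a, v⟫ * stdGaussianDensity v) :=
    (by fun_prop : Function.HasTemperateGrowth
      (fun v => ⟪A v, v⟫ * ⟪a, v⟫)).integrable_mul_stdGaussianDensity
  simp_rw [hsplit]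
  rw [integral_add (hℓ.fun_add hτ') hA, hodd, add_zero, integral_add hℓ hτ', integral_div,
    integral_sub hτ₂ (hτ.const_mul _), integral_const_mul, hφ.integral_apply_mul_inner,
    hφ₂.integral_apply_mul_inner, hφ.integral_apply_mul_inner]
  ring

theorem integral_transportCoeff_mul_norm_sq_mul_stdGaussianDensity {ι : Type*} [Fintype ι]
    (b : OrthonormalBasis ι ℝ V) :
    ∫ v, transportCoeff ℓ A τ v * (‖v‖ ^ 2 / 2 * stdGaussianDensity v) =
      (finrank ℝ V + 2) / 2 * ∑ i, ⟪b i, A (b i)⟫ := by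
  have hsplit : ∀ v, transportCoeff ℓ A τ v * (‖v‖ ^ 2 / 2 * stdGaussianDensity v) =
      ⟪A v, v⟫ * (‖v‖ ^ 2 * stdGaussianDensity v) / 2
        + (ℓ v + τ v * (‖v‖ ^ 2 - finrank ℝ V) / 2) * ‖v‖ ^ 2 / 2 * stdGaussianDensity v :=
    fun v => by rw [transportCoeff]; ring
  have hodd : ∫ v, (ℓ v + τ v * (‖v‖ ^ 2 - finrank ℝ V) / 2) * ‖v‖ ^ 2 / 2 *
      stdGaussianDensity v = 0 :=
    integral_eq_zero_of_odd fun v => by simp [stdGaussianDensity_neg]; ring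
  simp_rw [hsplit]
  rw [integral_add, hodd, add_zero, integral_div,
    hasIsotropicSecondMoments_norm_sq_mul_stdGaussianDensity.integral_inner_apply_self b]
  · ring
  · simpa only [mul_assoc] using ((by fun_prop : Function.HasTemperateGrowth
      (fun v => ⟪A v, v⟫ * ‖v‖ ^ 2)).integrable_mul_stdGaussianDensity).div_const 2
  · exact (by fun_prop : Function.HasTemperateGrowth (fun v =>
      (ℓ v + τ v * (‖v‖ ^ 2 - finrank ℝ V) / 2) * ‖v‖ ^ 2 / 2)).integrable_mul_stdGaussianDensity

end StdGaussian

theorem globalMaxwellian_eq_stdGaussianDensity : globalMaxwellian = stdGaussianDensity := by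
  funext v; simp [globalMaxwellian, stdGaussianDensity]

theorem fderiv_hilbertFirst_apply {ρ θ : EuclideanSpace ℝ (Fin 3) → ℝ}
    {u : EuclideanSpace ℝ (Fin 3) → EuclideanSpace ℝ (Fin 3)} {x : EuclideanSpace ℝ (Fin 3)}
    (hρ : DifferentiableAt ℝ ρ x) (hθ : DifferentiableAt ℝ θ x) (hu : DifferentiableAt ℝ u x)
    (v : EuclideanSpace ℝ (Fin 3)) :
    fderiv ℝ (fun y => hilbertFirst ρ θ u y v) x v =
      transportCoeff (fderiv ℝ ρ x) (fderiv ℝ u x) (fderiv ℝ θ x) v *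
        √(globalMaxwellian v) := by
  have hinner : HasFDerivAt (fun y => ⟪u y, v⟫) (innerSL ℝ v ∘L fderiv ℝ u x) x :=
    ((innerSL ℝ v).hasFDerivAt.comp x hu.hasFDerivAt).congr_of_eventuallyEq
      (Filter.Eventually.of_forall fun y => real_inner_comm _ _)
  have h : HasFDerivAt (fun y => hilbertFirst ρ θ u y v) _ x :=
    (((hρ.hasFDerivAt.add hinner).add (hθ.hasFDerivAt.mul_const ((‖v‖ ^ 2 - 3) / 2))).mul_const
      √(globalMaxwellian v)).congr_of_eventuallyEq
      (Filter.Eventually.of_forall fun y => by simp only [hilbertFirst, Pi.add_apply]; ring)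
  rw [h.fderiv]
  simp [transportCoeff, real_inner_comm]
  ring

theorem fderiv_hilbertFirst_apply_mul {ρ θ : EuclideanSpace ℝ (Fin 3) → ℝ}
    {u : EuclideanSpace ℝ (Fin 3) → EuclideanSpace ℝ (Fin 3)} {x : EuclideanSpace ℝ (Fin 3)}
    (hρ : DifferentiableAt ℝ ρ x) (hθ : DifferentiableAt ℝ θ x) (hu : DifferentiableAt ℝ u x)
    (v : EuclideanSpace ℝ (Fin 3)) (w : ℝ) :
    fderiv ℝ (fun y => hilbertFirst ρ θ u y v) x v * (w * √(globalMaxwellian v)) =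
      transportCoeff (fderiv ℝ ρ x) (fderiv ℝ u x) (fderiv ℝ θ x) v *
        (w * stdGaussianDensity v) := by
  rw [fderiv_hilbertFirst_apply hρ hθ hu, ← mul_self_sqrt (stdGaussianDensity_nonneg v),
    ← globalMaxwellian_eq_stdGaussianDensity]
  ring

theorem hydrodynamic_moments_of_transport_general
    (ρ θ : EuclideanSpace ℝ (Fin 3) → ℝ)
    (u : EuclideanSpace ℝ (Fin 3) → EuclideanSpace ℝ (Fin 3))
    (x : EuclideanSpace ℝ (Fin 3))
    (hρ : DifferentiableAt ℝ ρ x) (hθ : DifferentiableAt ℝ θ x)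
    (hu : DifferentiableAt ℝ u x) :
    ((∫ v : EuclideanSpace ℝ (Fin 3),
        fderiv ℝ (fun y => hilbertFirst ρ θ u y v) x v * Real.sqrt (globalMaxwellian v)) =
      ∑ i : Fin 3, fderiv ℝ u x (EuclideanSpace.single i 1) i) ∧
    (∀ i : Fin 3,
      (∫ v : EuclideanSpace ℝ (Fin 3),
          fderiv ℝ (fun y => hilbertFirst ρ θ u y v) x v *
            (v i * Real.sqrt (globalMaxwellian v))) =
        fderiv ℝ (fun y => ρ y + θ y) x (EuclideanSpace.single i 1)) ∧
    ((∫ v : EuclideanSpace ℝ (Fin 3),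
        fderiv ℝ (fun y => hilbertFirst ρ θ u y v) x v *
          (‖v‖ ^ 2 / 2 * Real.sqrt (globalMaxwellian v))) =
      5 / 2 * ∑ i : Fin 3, fderiv ℝ u x (EuclideanSpace.single i 1) i) := by
  have htrace : ∑ i, ⟪EuclideanSpace.basisFun (Fin 3) ℝ i,
      fderiv ℝ u x (EuclideanSpace.basisFun (Fin 3) ℝ i)⟫ =
      ∑ i : Fin 3, fderiv ℝ u x (EuclideanSpace.single i 1) i := by
    simp [EuclideanSpace.inner_single_left]
  refine ⟨?_, fun i => ?_, ?_⟩
  · simp_rw [fun v => by simpa using fderiv_hilbertFirst_apply_mul hρ hθ hu v 1]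
    rw [integral_transportCoeff_mul_stdGaussianDensity _ _ _ (EuclideanSpace.basisFun _ ℝ), htrace]
  · have hcoord : ∀ v : EuclideanSpace ℝ (Fin 3), v i = ⟪EuclideanSpace.single i 1, v⟫ := by
      simp [EuclideanSpace.inner_single_left]
    simp_rw [fderiv_hilbertFirst_apply_mul hρ hθ hu, hcoord]
    rw [integral_transportCoeff_mul_inner_mul_stdGaussianDensity, fderiv_fun_add hρ hθ,
      add_apply]
  · simp_rw [fderiv_hilbertFirst_apply_mul hρ hθ hu]
    rw [integral_transportCoeff_mul_norm_sq_mul_stdGaussianDensity _ _ _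
      (EuclideanSpace.basisFun _ ℝ), htrace]
    norm_num

/-- Hydrodynamic moments of the transport term `v·∇ₓ f₁` of the first Hilbert correction:
its moments against `√μ`, `v_i √μ`, `(|v|²/2) √μ` are `∇·u`, `∂_{x_i}(ρ+θ)`, `(5/2)∇·u`. -/
theorem hydrodynamic_moments_of_transport
    (ρ θ : EuclideanSpace ℝ (Fin 3) → ℝ)
    (u : EuclideanSpace ℝ (Fin 3) → EuclideanSpace ℝ (Fin 3))
    (U : Set (EuclideanSpace ℝ (Fin 3))) (hU : IsOpen U)
    (x : EuclideanSpace ℝ (Fin 3)) (hx : x ∈ U)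
    (hρ : DifferentiableAt ℝ ρ x) (hθ : DifferentiableAt ℝ θ x)
    (hu : DifferentiableAt ℝ u x) :
    ((∫ v : EuclideanSpace ℝ (Fin 3),
        fderiv ℝ (fun y => hilbertFirst ρ θ u y v) x v * Real.sqrt (globalMaxwellian v)) =
      ∑ i : Fin 3, fderiv ℝ u x (EuclideanSpace.single i 1) i) ∧
    (∀ i : Fin 3,
      (∫ v : EuclideanSpace ℝ (Fin 3),
          fderiv ℝ (fun y => hilbertFirst ρ θ u y v) x v *
            (v i * Real.sqrt (globalMaxwellian v))) =
        fderiv ℝ (fun y => ρ y + θ y) x (EuclideanSpace.single i 1)) ∧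
    ((∫ v : EuclideanSpace ℝ (Fin 3),
        fderiv ℝ (fun y => hilbertFirst ρ θ u y v) x v *
          (‖v‖ ^ 2 / 2 * Real.sqrt (globalMaxwellian v))) =
      5 / 2 * ∑ i : Fin 3, fderiv ℝ u x (EuclideanSpace.single i 1) i) :=
  hydrodynamic_moments_of_transport_general ρ θ u x hρ hθ hu
end
end

section
/- Weighted Grad-kernel integral estimate: for every 0 < ϱ < 1/4 there exists a constant C_ϱ such that for all v ∈ ℝ³, ∫_{ℝ³} (1/|v−v⋆|) exp( −|v−v⋆|²/8 − (1/8) (|v|²−|v⋆|²)²/|v−v⋆|² + ϱ(|v|² − |v⋆|²) ) dv⋆ ≤ C_ϱ / (1+|v|). -/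
/-!
Writing `vs = v + w`, one has `‖v‖² - ‖vs‖² = -(2⟪v, w⟫ + ‖w‖²)`, and completing the square in
`(‖w‖, ⟪v, w⟫ / ‖w‖)` bounds the exponent by `-β ‖w‖² - κ |⟪v, w⟫|` with `β, κ > 0` as long as
`0 < ϱ < 1/4`. After a rotation taking `v` to `‖v‖ e₀`, the bound `‖x‖⁻¹ ≤ |x₁|^(-1/2) |x₂|^(-1/2)`
splits the majorant into a product of one-dimensional integrals. Only the factor in `x₀` depends on
`v`; it is at most `√(π / β)` and at most `2 / (κ ‖v‖)`, hence `O(1 / (1 + ‖v‖))`.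
-/

open MeasureTheory Real
open scoped RealInnerProductSpace

lemma grad_exponent_le {ϱ r : ℝ} (hϱ₀ : 0 < ϱ) (hϱ₁ : ϱ < 1 / 4) (hr : 0 < r) (I : ℝ) :
    -r ^ 2 / 8 - 1 / 8 * (2 * I + r ^ 2) ^ 2 / r ^ 2 - ϱ * (2 * I + r ^ 2) ≤
      -((1 / 4 - ϱ) / 8) * r ^ 2 - (1 / 4 - ϱ) / 2 * |I| := by
  set p := I / r
  have hI : I = p * r := (div_mul_cancel₀ I hr.ne').symm
  have hsq : -r ^ 2 / 8 - 1 / 8 * (2 * I + r ^ 2) ^ 2 / r ^ 2 - ϱ * (2 * I + r ^ 2) =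
      -((1 / 4 + ϱ) * (r + p) ^ 2) - (1 / 4 - ϱ) * p ^ 2 := by
    rw [hI]; field_simp; ring
  have hquad : r ^ 2 / 8 + |p| * r / 2 ≤ (r + p) ^ 2 + p ^ 2 := by
    nlinarith [sq_nonneg (7 * r - 10 * |p|), sq_abs p,
      mul_le_mul_of_nonneg_right (neg_abs_le p) hr.le]
  rw [hsq, hI, abs_mul, abs_of_pos hr]
  nlinarith [mul_le_mul_of_nonneg_left hquad (by linarith : (0 : ℝ) ≤ 1 / 4 - ϱ),
    mul_nonneg hϱ₀.le (sq_nonneg (r + p))]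

noncomputable def weightedGradKernel {E : Type*} [NormedAddCommGroup E] (ϱ : ℝ) (v vs : E) : ℝ :=
  (1 / ‖v - vs‖) * Real.exp (-‖v - vs‖ ^ 2 / 8 -
    (1 / 8) * (‖v‖ ^ 2 - ‖vs‖ ^ 2) ^ 2 / ‖v - vs‖ ^ 2 + ϱ * (‖v‖ ^ 2 - ‖vs‖ ^ 2))

lemma weightedGradKernel_add_le {E : Type*} [NormedAddCommGroup E] [InnerProductSpace ℝ E]
    {ϱ : ℝ} (hϱ₀ : 0 < ϱ) (hϱ₁ : ϱ < 1 / 4) (v w : E) :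
    weightedGradKernel ϱ v (v + w) ≤
      ‖w‖⁻¹ * exp (-((1 / 4 - ϱ) / 8) * ‖w‖ ^ 2 - (1 / 4 - ϱ) / 2 * |⟪v, w⟫|) := by
  rcases eq_or_ne w 0 with rfl | hw
  · simp [weightedGradKernel]
  have hsq : ‖v‖ ^ 2 - ‖v + w‖ ^ 2 = -(2 * ⟪v, w⟫ + ‖w‖ ^ 2) := by
    rw [norm_add_sq_real]; ring
  rw [weightedGradKernel, sub_add_cancel_left, norm_neg, one_div, hsq, neg_sq, mul_neg,
    ← sub_eq_add_neg]
  exact mul_le_mul_of_nonneg_left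
    (exp_le_exp.mpr (grad_exponent_le hϱ₀ hϱ₁ (norm_pos_iff.mpr hw) _)) (by positivity)

lemma integrable_exp_neg_mul_sq_sub_mul_abs {β a : ℝ} (hβ : 0 < β) (ha : 0 ≤ a) :
    Integrable fun t : ℝ => exp (-β * t ^ 2 - a * |t|) := by
  refine (integrable_exp_neg_mul_sq hβ).mono' (by fun_prop) (ae_of_all _ fun t => ?_)
  rw [norm_of_nonneg (exp_pos _).le, exp_le_exp]
  nlinarith [abs_nonneg t]

lemma integral_exp_neg_mul_sq_sub_mul_abs_le_sqrt {β a : ℝ} (hβ : 0 < β) (ha : 0 ≤ a) :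
    ∫ t : ℝ, exp (-β * t ^ 2 - a * |t|) ≤ √(π / β) := by
  rw [← integral_gaussian]
  refine integral_mono (integrable_exp_neg_mul_sq_sub_mul_abs hβ ha)
    (integrable_exp_neg_mul_sq hβ) fun t => ?_
  rw [exp_le_exp]
  nlinarith [abs_nonneg t]

lemma integral_exp_neg_mul_sq_sub_mul_abs_le_two_div {β a : ℝ} (hβ : 0 ≤ β) (ha : 0 < a) :
    ∫ t : ℝ, exp (-β * t ^ 2 - a * |t|) ≤ 2 / a := by
  have hexp : IntegrableOn (fun u : ℝ => exp (-a * u)) (Set.Ioi 0) := by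
    simpa [neg_mul] using exp_neg_integrableOn_Ioi 0 ha
  have hle : ∀ u, 0 < u → exp (-β * u ^ 2 - a * u) ≤ exp (-a * u) := fun u _ => by
    rw [exp_le_exp]
    nlinarith [sq_nonneg u]
  have hint : IntegrableOn (fun u : ℝ => exp (-β * u ^ 2 - a * u)) (Set.Ioi 0) := by
    refine hexp.mono' (by fun_prop) ?_
    filter_upwards [ae_restrict_mem measurableSet_Ioi] with u hu
    rw [norm_of_nonneg (exp_pos _).le]
    exact hle u hu
  calc ∫ t : ℝ, exp (-β * t ^ 2 - a * |t|)
      = 2 * ∫ u in Set.Ioi (0 : ℝ), exp (-β * u ^ 2 - a * u) := by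
        rw [← integral_comp_abs (f := fun u => exp (-β * u ^ 2 - a * u))]
        simp only [sq_abs]
    _ ≤ 2 * ∫ u in Set.Ioi (0 : ℝ), exp (-a * u) := by
        gcongr 2 * ?_
        exact setIntegral_mono_on hint hexp measurableSet_Ioi hle
    _ = 2 / a := by
        rw [integral_exp_mul_Ioi (by linarith) 0]
        field_simp
        simp

lemma exists_integral_exp_neg_mul_sq_sub_mul_abs_le {β κ : ℝ} (hβ : 0 < β) (hκ : 0 < κ) :
    ∃ A > 0, ∀ V : ℝ, 0 ≤ V → ∫ t : ℝ, exp (-β * t ^ 2 - κ * V * |t|) ≤ A / (1 + V) := by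
  refine ⟨max (2 * √(π / β)) (4 / κ), by positivity, fun V hV => ?_⟩
  rw [le_div_iff₀ (by linarith)]
  rcases le_or_gt V 1 with hV1 | hV1
  · have hsqrt := integral_exp_neg_mul_sq_sub_mul_abs_le_sqrt hβ (by positivity : 0 ≤ κ * V)
    have hnonneg : 0 ≤ ∫ t : ℝ, exp (-β * t ^ 2 - κ * V * |t|) :=
      integral_nonneg fun t => (exp_pos _).le
    nlinarith [le_max_left (2 * √(π / β)) (4 / κ)]
  · have htwo := integral_exp_neg_mul_sq_sub_mul_abs_le_two_div hβ.le (by positivity : 0 < κ * V)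
    calc (∫ t : ℝ, exp (-β * t ^ 2 - κ * V * |t|)) * (1 + V)
        ≤ 2 / (κ * V) * (2 * V) := by gcongr; linarith
      _ = 4 / κ := by field_simp; ring
      _ ≤ max (2 * √(π / β)) (4 / κ) := le_max_right _ _

lemma integrable_abs_rpow_mul_exp_neg_mul_sq {b s : ℝ} (hb : 0 < b) (hs : -1 < s) :
    Integrable fun t : ℝ => |t| ^ s * exp (-b * t ^ 2) := by
  have hIoi : IntegrableOn (fun t : ℝ => |t| ^ s * exp (-b * t ^ 2)) (Set.Ioi 0) :=
    (integrableOn_rpow_mul_exp_neg_mul_sq hb hs).congr_fun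
      (fun t ht => by rw [abs_of_pos (Set.mem_Ioi.mp ht)]) measurableSet_Ioi
  have hIio : IntegrableOn (fun t : ℝ => |t| ^ s * exp (-b * t ^ 2)) (Set.Iio 0) := by
    rw [← (Measure.measurePreserving_neg volume).integrableOn_comp_preimage
      (Homeomorph.neg ℝ).measurableEmbedding]
    simpa only [Function.comp_def, abs_neg, neg_sq, Set.neg_preimage, Set.neg_Iio, neg_zero]
      using hIoi
  rw [← integrableOn_univ, ← Set.Iio_union_Ici (a := (0 : ℝ)), integrableOn_union,
    integrableOn_Ici_iff_integrableOn_Ioi]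
  exact ⟨hIio, hIoi⟩

lemma EuclideanSpace.inv_norm_le_abs_rpow_mul_abs_rpow {ι : Type*} [Fintype ι]
    {x : EuclideanSpace ℝ ι} {i j : ι} (hij : i ≠ j) (hi : x i ≠ 0) (hj : x j ≠ 0) :
    ‖x‖⁻¹ ≤ |x i| ^ (-(1 / 2) : ℝ) * |x j| ^ (-(1 / 2) : ℝ) := by
  have hpos : 0 < |x i| * |x j| := by positivity
  have hle : |x i| * |x j| ≤ ‖x‖ ^ 2 := by
    classical
    have hpair : x i ^ 2 + x j ^ 2 ≤ ‖x‖ ^ 2 := by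
      simp only [EuclideanSpace.norm_sq_eq, Real.norm_eq_abs, sq_abs]
      rw [← Finset.sum_pair (f := fun k => x k ^ 2) hij]
      exact Finset.sum_le_sum_of_subset_of_nonneg (Finset.subset_univ _)
        fun k _ _ => sq_nonneg _
    nlinarith [sq_nonneg (|x i| - |x j|), sq_abs (x i), sq_abs (x j)]
  calc ‖x‖⁻¹ = (‖x‖ ^ 2) ^ (-(1 / 2) : ℝ) := by
        rw [rpow_neg (sq_nonneg _), ← sqrt_eq_rpow, sqrt_sq (norm_nonneg x)]
    _ ≤ (|x i| * |x j|) ^ (-(1 / 2) : ℝ) := rpow_le_rpow_of_nonpos hpos hle (by norm_num)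
    _ = _ := mul_rpow (abs_nonneg _) (abs_nonneg _)

lemma EuclideanSpace.inv_norm_mul_exp_le_prod {β a : ℝ} {x : EuclideanSpace ℝ (Fin 3)}
    (h₁ : x 1 ≠ 0) (h₂ : x 2 ≠ 0) :
    ‖x‖⁻¹ * exp (-β * ‖x‖ ^ 2 - a * |x 0|) ≤
      exp (-β * x 0 ^ 2 - a * |x 0|) * (|x 1| ^ (-(1 / 2) : ℝ) * exp (-β * x 1 ^ 2)) *
        (|x 2| ^ (-(1 / 2) : ℝ) * exp (-β * x 2 ^ 2)) := by
  have hnorm : ‖x‖ ^ 2 = x 0 ^ 2 + x 1 ^ 2 + x 2 ^ 2 := by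
    simp only [EuclideanSpace.norm_sq_eq, Fin.sum_univ_three, Real.norm_eq_abs, sq_abs]
  have hexp : exp (-β * ‖x‖ ^ 2 - a * |x 0|) =
      exp (-β * x 0 ^ 2 - a * |x 0|) * exp (-β * x 1 ^ 2) * exp (-β * x 2 ^ 2) := by
    rw [hnorm, ← exp_add, ← exp_add]; ring_nf
  rw [hexp]
  calc ‖x‖⁻¹ * (exp (-β * x 0 ^ 2 - a * |x 0|) * exp (-β * x 1 ^ 2) * exp (-β * x 2 ^ 2))
      ≤ |x 1| ^ (-(1 / 2) : ℝ) * |x 2| ^ (-(1 / 2) : ℝ) *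
          (exp (-β * x 0 ^ 2 - a * |x 0|) * exp (-β * x 1 ^ 2) * exp (-β * x 2 ^ 2)) := by
        gcongr
        exact EuclideanSpace.inv_norm_le_abs_rpow_mul_abs_rpow (by decide) h₁ h₂
    _ = _ := by ring

lemma integrable_and_integral_inv_norm_mul_exp_le {β a : ℝ} (hβ : 0 < β) (ha : 0 ≤ a) :
    Integrable (fun x : EuclideanSpace ℝ (Fin 3) => ‖x‖⁻¹ * exp (-β * ‖x‖ ^ 2 - a * |x 0|)) ∧
      ∫ x : EuclideanSpace ℝ (Fin 3), ‖x‖⁻¹ * exp (-β * ‖x‖ ^ 2 - a * |x 0|) ≤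
        (∫ t : ℝ, exp (-β * t ^ 2 - a * |t|)) *
          (∫ t : ℝ, |t| ^ (-(1 / 2) : ℝ) * exp (-β * t ^ 2)) ^ 2 := by
  set F := fun x : EuclideanSpace ℝ (Fin 3) => ‖x‖⁻¹ * exp (-β * ‖x‖ ^ 2 - a * |x 0|)
  set g := fun t : ℝ => |t| ^ (-(1 / 2) : ℝ) * exp (-β * t ^ 2)
  set f : Fin 3 → ℝ → ℝ := ![fun t => exp (-β * t ^ 2 - a * |t|), g, g]
  have hf : ∀ i, Integrable (f i) := by
    intro i
    fin_cases i
    · exact integrable_exp_neg_mul_sq_sub_mul_abs hβ ha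
    all_goals exact integrable_abs_rpow_mul_exp_neg_mul_sq hβ (by norm_num)
  have hprod : Integrable fun y : Fin 3 → ℝ => ∏ i, f i (y i) := Integrable.fintype_prod hf
  have hmaj : ∀ᵐ y : Fin 3 → ℝ, F (WithLp.toLp 2 y) ≤ ∏ i, f i (y i) := by
    filter_upwards [Measure.ae_eval_ne _ 1 0, Measure.ae_eval_ne _ 2 0] with y h₁ h₂
    simpa [F, f, g, Fin.prod_univ_three] using
      EuclideanSpace.inv_norm_mul_exp_le_prod (β := β) (a := a) (x := WithLp.toLp 2 y) h₁ h₂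
  have hmp := PiLp.volume_preserving_toLp (Fin 3)
  have hemb := (MeasurableEquiv.toLp 2 (Fin 3 → ℝ)).measurableEmbedding
  have hF : Integrable (F ∘ WithLp.toLp 2) := by
    refine hprod.mono' (Measurable.aestronglyMeasurable (by simp only [F]; fun_prop))
      (hmaj.mono fun y hy => ?_)
    rwa [Function.comp_apply, Real.norm_of_nonneg (by simp only [F]; positivity)]
  refine ⟨(hmp.integrable_comp_emb hemb).mp hF, ?_⟩
  rw [← hmp.integral_comp hemb]
  calc ∫ y, F (WithLp.toLp 2 y) ≤ ∫ y : Fin 3 → ℝ, ∏ i, f i (y i) :=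
        integral_mono_of_nonneg (ae_of_all _ fun y => by positivity) hprod hmaj
    _ = _ := by
        rw [integral_fintype_prod_volume_eq_prod, Fin.prod_univ_three]
        simp only [f, Matrix.cons_val_zero, Matrix.cons_val_one, Matrix.cons_val]
        ring

lemma exists_linearIsometryEquiv_inner_eq_norm_mul {E : Type*} [NormedAddCommGroup E]
    [InnerProductSpace ℝ E] [FiniteDimensional ℝ E] {n : ℕ} (hE : Module.finrank ℝ E = n + 1)
    (v : E) :
    ∃ L : E ≃ₗᵢ[ℝ] EuclideanSpace ℝ (Fin (n + 1)), ∀ w, ⟪v, w⟫ = ‖v‖ * L w 0 := by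
  obtain ⟨e, he, hv⟩ : ∃ e : E, ‖e‖ = 1 ∧ v = ‖v‖ • e := by
    rcases eq_or_ne v 0 with rfl | hv
    · have : Nontrivial E := Module.nontrivial_of_finrank_eq_succ hE
      obtain ⟨e, he⟩ := exists_norm_eq E zero_le_one
      exact ⟨e, he, by simp⟩
    · exact ⟨‖v‖⁻¹ • v, norm_smul_inv_norm hv, by simp [smul_smul, hv]⟩
  have horth : Orthonormal ℝ (({0} : Set (Fin (n + 1))).domRestrict fun _ => e) :=
    orthonormal_iff_ite.mpr fun i j => by
      rw [Subsingleton.elim i j]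
      simp [he]
  obtain ⟨b, hb⟩ := horth.exists_orthonormalBasis_extension_of_card_eq (by simpa using hE)
  refine ⟨b.repr, fun w => ?_⟩
  conv_lhs => rw [hv]
  rw [real_inner_smul_left, b.repr_apply_apply, hb 0 rfl]

lemma integrable_and_integral_inv_norm_mul_exp_inner_le {E : Type*} [NormedAddCommGroup E]
    [InnerProductSpace ℝ E] [FiniteDimensional ℝ E] [MeasurableSpace E] [BorelSpace E]
    (hE : Module.finrank ℝ E = 3) {β κ : ℝ} (hβ : 0 < β) (hκ : 0 ≤ κ) (v : E) :
    Integrable (fun w : E => ‖w‖⁻¹ * exp (-β * ‖w‖ ^ 2 - κ * |⟪v, w⟫|)) ∧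
      ∫ w : E, ‖w‖⁻¹ * exp (-β * ‖w‖ ^ 2 - κ * |⟪v, w⟫|) ≤
        (∫ t : ℝ, exp (-β * t ^ 2 - κ * ‖v‖ * |t|)) *
          (∫ t : ℝ, |t| ^ (-(1 / 2) : ℝ) * exp (-β * t ^ 2)) ^ 2 := by
  obtain ⟨L, hL⟩ := exists_linearIsometryEquiv_inner_eq_norm_mul hE v
  have hcomp : (fun w : E => ‖w‖⁻¹ * exp (-β * ‖w‖ ^ 2 - κ * |⟪v, w⟫|)) =
      (fun x : EuclideanSpace ℝ (Fin 3) =>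
        ‖x‖⁻¹ * exp (-β * ‖x‖ ^ 2 - κ * ‖v‖ * |x 0|)) ∘ L := by
    ext w
    simp only [Function.comp_apply, LinearIsometryEquiv.norm_map, hL, abs_mul, abs_norm,
      mul_assoc]
  obtain ⟨hint, hle⟩ :=
    integrable_and_integral_inv_norm_mul_exp_le hβ (mul_nonneg hκ (norm_nonneg v))
  have hemb := L.toHomeomorph.measurableEmbedding
  rw [hcomp, L.measurePreserving.integrable_comp_emb hemb, Function.comp_def]
  exact ⟨hint, (L.measurePreserving.integral_comp hemb _).trans_le hle⟩

/-- Weighted Grad-kernel integral estimate: for `0 < ϱ < 1/4` there is a constant `C_ϱ`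
such that for all `v ∈ ℝ³`,
`∫ (1/|v−v⋆|) exp( −|v−v⋆|²/8 − (1/8)(|v|²−|v⋆|²)²/|v−v⋆|² + ϱ(|v|²−|v⋆|²) ) dv⋆ ≤ C_ϱ/(1+|v|)`. -/
theorem weighted_grad_kernel_estimate (ϱ : ℝ) (hϱ₀ : 0 < ϱ) (hϱ₁ : ϱ < 1 / 4) :
    ∃ C : ℝ, 0 < C ∧
      ∀ v : EuclideanSpace ℝ (Fin 3),
        (∫ vs : EuclideanSpace ℝ (Fin 3),
          (1 / ‖v - vs‖) *
            Real.exp (-‖v - vs‖ ^ 2 / 8 -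
              (1 / 8) * (‖v‖ ^ 2 - ‖vs‖ ^ 2) ^ 2 / ‖v - vs‖ ^ 2 +
              ϱ * (‖v‖ ^ 2 - ‖vs‖ ^ 2))) ≤ C / (1 + ‖v‖) := by
  set β := (1 / 4 - ϱ) / 8
  set κ := (1 / 4 - ϱ) / 2
  have hβ : 0 < β := by positivity
  have hκ : 0 < κ := by positivity
  obtain ⟨A, hA, hgauss⟩ := exists_integral_exp_neg_mul_sq_sub_mul_abs_le hβ hκ
  set M := ∫ t : ℝ, |t| ^ (-(1 / 2) : ℝ) * exp (-β * t ^ 2)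
  refine ⟨A * M ^ 2 + 1, by positivity, fun v => ?_⟩
  obtain ⟨hint, hle⟩ :=
    integrable_and_integral_inv_norm_mul_exp_inner_le finrank_euclideanSpace_fin hβ hκ.le v
  calc ∫ vs, weightedGradKernel ϱ v vs
      = ∫ w, weightedGradKernel ϱ v (v + w) := (integral_add_left_eq_self _ v).symm
    _ ≤ ∫ w, ‖w‖⁻¹ * exp (-β * ‖w‖ ^ 2 - κ * |⟪v, w⟫|) :=
        integral_mono_of_nonneg (ae_of_all _ fun _ => by unfold weightedGradKernel; positivity)
          hint (ae_of_all _ (weightedGradKernel_add_le hϱ₀ hϱ₁ v))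
    _ ≤ A / (1 + ‖v‖) * M ^ 2 := hle.trans (by gcongr; exact hgauss _ (norm_nonneg v))
    _ ≤ (A * M ^ 2 + 1) / (1 + ‖v‖) := by
        rw [div_mul_eq_mul_div]
        gcongr
        linarith
end

section
/- Time derivative of the Dirichlet heat potential under the compatibility condition (absence of an initial layer): let κ, η > 0, a ≥ 0, H(t,z) = (κηt)^{−1/2} e^{−z²/(4κηt)} e^{−κηa²t}, G_D(t,x,y) = H(t,x−y) − H(t,x+y), and let g ∈ C²([0,∞)) satisfy g(0) = 0 and |g(y)| + |g′(y)| + |g″(y)| ≤ M e^{−cy} for some M, c > 0. Then for every t > 0 and x > 0, ∂_t ∫₀^∞ G_D(t,x,y) g(y) dy = ∫₀^∞ G_D(t,x,y) · κη ( g″(y) − a² g(y) ) dy. -/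
/-!
The kernel `H` solves the damped heat equation `∂ₜH = κη (∂_z² H − a² H)`, and `H`, `∂_z H`,
`∂_z² H` are bounded in `z`, uniformly for times bounded away from `0`. Hence the potential may be
differentiated under the integral sign, and `∂_y² G_D` can then be moved onto `g` by integrating
by parts twice on `(0, ∞)`: the terms at infinity vanish by the exponential decay of `g` and `g′`,
and those at `y = 0` because `G_D(t, x, 0) = 0` and `g 0 = 0`.
-/

open MeasureTheory Real Set

noncomputable section

/-- The one-dimensional damped heat kernel
`H(t,z) = (κηt)^{−1/2} e^{−z²/(4κηt)} e^{−κηa²t}`. -/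
def heatKer (κ η a t z : ℝ) : ℝ :=
  (Real.sqrt (κ * η * t))⁻¹ * Real.exp (-z ^ 2 / (4 * (κ * η * t))) *
    Real.exp (-(κ * η * a ^ 2 * t))

/-- The half-line heat kernel with homogeneous Dirichlet boundary condition,
`G_D(t,x,y) = H(t,x−y) − H(t,x+y)`. -/
def dirichletKer (κ η a t x y : ℝ) : ℝ := heatKer κ η a t (x - y) - heatKer κ η a t (x + y)

open Filter Topology

def heatKerDz (κ η a t z : ℝ) : ℝ := -z / (2 * (κ * η * t)) * heatKer κ η a t z

def heatKerDzz (κ η a t z : ℝ) : ℝ :=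
  (z ^ 2 / (4 * (κ * η * t) ^ 2) - (2 * (κ * η * t))⁻¹) * heatKer κ η a t z

section HeatKernel

variable {κ η a t : ℝ}

theorem hasDerivAt_heatKer_space (z : ℝ) :
    HasDerivAt (heatKer κ η a t) (heatKerDz κ η a t z) z := by
  have h := ((((hasDerivAt_id' z).fun_pow 2).fun_neg.div_const (4 * (κ * η * t))).exp.const_mul
    (√(κ * η * t))⁻¹).mul_const (exp (-(κ * η * a ^ 2 * t)))
  refine h.congr_deriv ?_
  simp only [heatKerDz, heatKer]; ring

theorem hasDerivAt_heatKerDz_space (z : ℝ) :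
    HasDerivAt (heatKerDz κ η a t) (heatKerDzz κ η a t z) z := by
  have h := ((hasDerivAt_id' z).fun_neg.div_const (2 * (κ * η * t))).mul
    (hasDerivAt_heatKer_space (κ := κ) (η := η) (a := a) (t := t) z)
  refine h.congr_deriv ?_
  simp only [heatKerDzz, heatKerDz]; ring

theorem hasDerivAt_heatKer_time (hD : 0 < κ * η) (ht : 0 < t) (z : ℝ) :
    HasDerivAt (fun τ => heatKer κ η a τ z)
      (κ * η * (heatKerDzz κ η a t z - a ^ 2 * heatKer κ η a t z)) t := by
  have hr : 0 < κ * η * t := mul_pos hD ht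
  have hsqrt := (((hasDerivAt_id' t).const_mul (κ * η)).sqrt hr.ne').fun_inv
    (Real.sqrt_pos.2 hr).ne'
  have hgauss := ((((hasDerivAt_id' t).const_mul (κ * η)).const_mul 4).fun_inv
    (by positivity : (4 * (κ * η * t)) ≠ 0)).const_mul (-z ^ 2) |>.exp
  have hdamp := ((hasDerivAt_id' t).const_mul (κ * η * a ^ 2)).fun_neg.exp
  refine ((hsqrt.fun_mul hgauss).fun_mul hdamp).congr_deriv ?_
  simp only [heatKerDzz, heatKer]
  have hs : √(κ * η * t) ^ 2 = κ * η * t := Real.sq_sqrt hr.le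
  have hκ : κ ≠ 0 := left_ne_zero_of_mul hD.ne'
  have hη : η ≠ 0 := right_ne_zero_of_mul hD.ne'
  field_simp
  rw [hs]
  ring

theorem heatKer_pos (hD : 0 < κ * η) (ht : 0 < t) (z : ℝ) : 0 < heatKer κ η a t z := by
  have := mul_pos hD ht
  unfold heatKer; positivity

theorem heatKer_le_gaussian (hD : 0 < κ * η) (ht : 0 < t) (z : ℝ) :
    heatKer κ η a t z ≤ (√(κ * η * t))⁻¹ * exp (-z ^ 2 / (4 * (κ * η * t))) := by
  have : 0 ≤ κ * η * a ^ 2 * t := by have := mul_pos hD ht; positivity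
  exact mul_le_of_le_one_right (by positivity) (exp_le_one_iff.2 (by linarith))

theorem heatKer_le (hD : 0 < κ * η) (ht : 0 < t) (z : ℝ) :
    heatKer κ η a t z ≤ (√(κ * η * t))⁻¹ := by
  have : 0 ≤ z ^ 2 / (4 * (κ * η * t)) := by have := mul_pos hD ht; positivity
  refine (heatKer_le_gaussian hD ht z).trans (mul_le_of_le_one_right (by positivity) ?_)
  exact exp_le_one_iff.2 (by rw [neg_div]; linarith)

theorem sq_mul_exp_neg_sq_div_le {r : ℝ} (hr : 0 < r) (z : ℝ) :
    z ^ 2 * exp (-z ^ 2 / (4 * r)) ≤ 4 * r := by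
  have h := (mul_exp_neg_le_exp_neg_one (z ^ 2 / (4 * r))).trans (exp_le_one_iff.2 (by norm_num))
  rw [← neg_div] at h
  calc z ^ 2 * exp (-z ^ 2 / (4 * r)) = 4 * r * (z ^ 2 / (4 * r) * exp (-z ^ 2 / (4 * r))) := by
        field_simp
    _ ≤ 4 * r * 1 := by gcongr
    _ = 4 * r := mul_one _

theorem sq_mul_heatKer_le (hD : 0 < κ * η) (ht : 0 < t) (z : ℝ) :
    z ^ 2 * heatKer κ η a t z ≤ 4 * (κ * η * t) * (√(κ * η * t))⁻¹ := by
  calc z ^ 2 * heatKer κ η a t z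
      ≤ z ^ 2 * ((√(κ * η * t))⁻¹ * exp (-z ^ 2 / (4 * (κ * η * t)))) := by
        gcongr; exact heatKer_le_gaussian hD ht z
    _ = (√(κ * η * t))⁻¹ * (z ^ 2 * exp (-z ^ 2 / (4 * (κ * η * t)))) := by ring
    _ ≤ (√(κ * η * t))⁻¹ * (4 * (κ * η * t)) := by
        gcongr _ * ?_; exact sq_mul_exp_neg_sq_div_le (mul_pos hD ht) z
    _ = 4 * (κ * η * t) * (√(κ * η * t))⁻¹ := mul_comm _ _

theorem abs_heatKerDz_le (hD : 0 < κ * η) (ht : 0 < t) (z : ℝ) :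
    |heatKerDz κ η a t z| ≤ (1 + 4 * (κ * η * t)) / (2 * (κ * η * t)) * (√(κ * η * t))⁻¹ := by
  have hr := mul_pos hD ht
  have hH := heatKer_pos (a := a) hD ht z
  have habs : |z| ≤ 1 + z ^ 2 := by nlinarith [sq_abs z, abs_nonneg z, sq_nonneg (|z| - 1)]
  calc |heatKerDz κ η a t z| = |z| * heatKer κ η a t z / (2 * (κ * η * t)) := by
        rw [heatKerDz, abs_mul, abs_div, abs_neg, abs_of_pos hH,
          abs_of_pos (show (0 : ℝ) < 2 * (κ * η * t) by positivity)]
        ring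
    _ ≤ (1 + z ^ 2) * heatKer κ η a t z / (2 * (κ * η * t)) := by gcongr
    _ = (heatKer κ η a t z + z ^ 2 * heatKer κ η a t z) / (2 * (κ * η * t)) := by ring
    _ ≤ ((√(κ * η * t))⁻¹ + 4 * (κ * η * t) * (√(κ * η * t))⁻¹) / (2 * (κ * η * t)) := by
        gcongr (?_ + ?_) / _
        exacts [heatKer_le hD ht z, sq_mul_heatKer_le hD ht z]
    _ = (1 + 4 * (κ * η * t)) / (2 * (κ * η * t)) * (√(κ * η * t))⁻¹ := by ring

theorem abs_heatKerDzz_le (hD : 0 < κ * η) (ht : 0 < t) (z : ℝ) :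
    |heatKerDzz κ η a t z| ≤ 3 / (2 * (κ * η * t)) * (√(κ * η * t))⁻¹ := by
  have hr := mul_pos hD ht
  have hH := heatKer_pos (a := a) hD ht z
  calc |heatKerDzz κ η a t z|
      ≤ z ^ 2 * heatKer κ η a t z / (4 * (κ * η * t) ^ 2) +
          heatKer κ η a t z / (2 * (κ * η * t)) := by
        rw [heatKerDzz, abs_mul, abs_of_pos hH]
        refine (mul_le_mul_of_nonneg_right (abs_sub _ _) hH.le).trans_eq ?_
        rw [abs_of_nonneg (by positivity), abs_of_pos (by positivity)]
        ring
    _ ≤ 4 * (κ * η * t) * (√(κ * η * t))⁻¹ / (4 * (κ * η * t) ^ 2) +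
          (√(κ * η * t))⁻¹ / (2 * (κ * η * t)) := by
        gcongr ?_ / _ + ?_ / _
        exacts [sq_mul_heatKer_le hD ht z, heatKer_le hD ht z]
    _ = 3 / (2 * (κ * η * t)) * (√(κ * η * t))⁻¹ := by
        field_simp; ring

end HeatKernel

def dirichletKerDy (κ η a t x y : ℝ) : ℝ :=
  -heatKerDz κ η a t (x - y) - heatKerDz κ η a t (x + y)

def dirichletKerDyy (κ η a t x y : ℝ) : ℝ :=
  heatKerDzz κ η a t (x - y) - heatKerDzz κ η a t (x + y)

section DirichletKernel

variable {κ η a t : ℝ} (x : ℝ)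

theorem dirichletKer_zero_right : dirichletKer κ η a t x 0 = 0 := by
  simp [dirichletKer]

theorem continuous_dirichletKer : Continuous (dirichletKer κ η a t x) := by
  unfold dirichletKer heatKer; fun_prop

theorem continuous_dirichletKerDy : Continuous (dirichletKerDy κ η a t x) := by
  unfold dirichletKerDy heatKerDz heatKer; fun_prop

theorem continuous_dirichletKerDyy : Continuous (dirichletKerDyy κ η a t x) := by
  unfold dirichletKerDyy heatKerDzz heatKer; fun_prop

theorem hasDerivAt_dirichletKer_space (y : ℝ) :
    HasDerivAt (dirichletKer κ η a t x) (dirichletKerDy κ η a t x y) y := by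
  have hH (z : ℝ) := hasDerivAt_heatKer_space (κ := κ) (η := η) (a := a) (t := t) z
  refine (((hH (x - y)).comp y ((hasDerivAt_id' y).const_sub x)).sub
    ((hH (x + y)).comp y ((hasDerivAt_id' y).const_add x))).congr_deriv ?_
  simp only [dirichletKerDy]; ring

theorem hasDerivAt_dirichletKerDy_space (y : ℝ) :
    HasDerivAt (dirichletKerDy κ η a t x) (dirichletKerDyy κ η a t x y) y := by
  have hHz (z : ℝ) := hasDerivAt_heatKerDz_space (κ := κ) (η := η) (a := a) (t := t) z
  refine (((hHz (x - y)).comp y ((hasDerivAt_id' y).const_sub x)).fun_neg.sub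
    ((hHz (x + y)).comp y ((hasDerivAt_id' y).const_add x))).congr_deriv ?_
  simp only [dirichletKerDyy]; ring

theorem hasDerivAt_dirichletKer_time (hD : 0 < κ * η) (ht : 0 < t) (y : ℝ) :
    HasDerivAt (fun τ => dirichletKer κ η a τ x y)
      (κ * η * (dirichletKerDyy κ η a t x y - a ^ 2 * dirichletKer κ η a t x y)) t := by
  refine ((hasDerivAt_heatKer_time hD ht (x - y)).sub
    (hasDerivAt_heatKer_time hD ht (x + y))).congr_deriv ?_
  simp only [dirichletKerDyy, dirichletKer]; ring

theorem abs_dirichletKer_le (hD : 0 < κ * η) (ht : 0 < t) (y : ℝ) :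
    |dirichletKer κ η a t x y| ≤ 2 * (√(κ * η * t))⁻¹ := by
  refine (abs_sub _ _).trans ?_
  rw [abs_of_pos (heatKer_pos hD ht _), abs_of_pos (heatKer_pos hD ht _)]
  linarith [heatKer_le (a := a) hD ht (x - y), heatKer_le (a := a) hD ht (x + y)]

theorem abs_dirichletKerDy_le (hD : 0 < κ * η) (ht : 0 < t) (y : ℝ) :
    |dirichletKerDy κ η a t x y| ≤
      2 * ((1 + 4 * (κ * η * t)) / (2 * (κ * η * t)) * (√(κ * η * t))⁻¹) := by
  refine (abs_sub _ _).trans ?_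
  rw [abs_neg]
  linarith [abs_heatKerDz_le (a := a) hD ht (x - y), abs_heatKerDz_le (a := a) hD ht (x + y)]

theorem abs_dirichletKerDyy_le (hD : 0 < κ * η) (ht : 0 < t) (y : ℝ) :
    |dirichletKerDyy κ η a t x y| ≤ 3 / (κ * η * t) * (√(κ * η * t))⁻¹ := by
  refine (abs_sub _ _).trans ?_
  have h := mul_pos hD ht
  have h₁ := abs_heatKerDzz_le (a := a) hD ht (x - y)
  have h₂ := abs_heatKerDzz_le (a := a) hD ht (x + y)
  calc _ ≤ 2 * (3 / (2 * (κ * η * t)) * (√(κ * η * t))⁻¹) := by linarith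
    _ = 3 / (κ * η * t) * (√(κ * η * t))⁻¹ := by field_simp

theorem abs_dirichletKer_time_deriv_le {s τ : ℝ} (hD : 0 < κ * η) (hs : 0 < s)
    (hsτ : s ≤ κ * η * τ) (y : ℝ) :
    |κ * η * (dirichletKerDyy κ η a τ x y - a ^ 2 * dirichletKer κ η a τ x y)| ≤
      κ * η * (3 / s + 2 * a ^ 2) * (√s)⁻¹ := by
  have hτ : 0 < τ := pos_of_mul_pos_right (hs.trans_le hsτ) hD.le
  have hsqrt : (√(κ * η * τ))⁻¹ ≤ (√s)⁻¹ := by gcongr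
  have hGyy : |dirichletKerDyy κ η a τ x y| ≤ 3 / s * (√s)⁻¹ :=
    (abs_dirichletKerDyy_le x hD hτ y).trans (by gcongr)
  have hG : |dirichletKer κ η a τ x y| ≤ 2 * (√s)⁻¹ :=
    (abs_dirichletKer_le x hD hτ y).trans (by gcongr)
  rw [abs_mul, abs_of_pos hD]
  calc κ * η * |dirichletKerDyy κ η a τ x y - a ^ 2 * dirichletKer κ η a τ x y|
      ≤ κ * η * (|dirichletKerDyy κ η a τ x y| + a ^ 2 * |dirichletKer κ η a τ x y|) := by
        gcongr
        refine (abs_sub _ _).trans_eq ?_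
        rw [abs_mul, abs_of_nonneg (sq_nonneg a)]
    _ ≤ κ * η * (3 / s * (√s)⁻¹ + a ^ 2 * (2 * (√s)⁻¹)) := by gcongr
    _ = κ * η * (3 / s + 2 * a ^ 2) * (√s)⁻¹ := by ring

end DirichletKernel

theorem integral_Ioi_deriv_deriv_mul_eq_mul_deriv_deriv {b : ℝ} {G G' G'' g g' g'' : ℝ → ℝ}
    (hG : ∀ y ∈ Ioi b, HasDerivAt G (G' y) y) (hG' : ∀ y ∈ Ioi b, HasDerivAt G' (G'' y) y)
    (hg : ∀ y ∈ Ioi b, HasDerivAt g (g' y) y) (hg' : ∀ y ∈ Ioi b, HasDerivAt g' (g'' y) y)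
    (hcont : ContinuousWithinAt (fun y => G' y * g y - G y * g' y) (Ici b) b)
    (hGb : G b = 0) (hgb : g b = 0)
    (hint : IntegrableOn (fun y => G'' y * g y) (Ioi b))
    (hint' : IntegrableOn (fun y => G y * g'' y) (Ioi b))
    (htop : Tendsto (fun y => G' y * g y - G y * g' y) atTop (𝓝 0)) :
    ∫ y in Ioi b, G'' y * g y = ∫ y in Ioi b, G y * g'' y := by
  have hderiv : ∀ y ∈ Ioi b, HasDerivAt (fun y => G' y * g y - G y * g' y)
      (G'' y * g y - G y * g'' y) y := fun y hy =>
    (((hG' y hy).mul (hg y hy)).sub ((hG y hy).mul (hg' y hy))).congr_deriv (by ring)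
  have h := integral_Ioi_of_hasDerivAt_of_tendsto hcont hderiv (hint.sub hint') htop
  rwa [hGb, hgb, zero_mul, mul_zero, sub_zero, sub_zero, integral_sub hint hint',
    sub_eq_zero] at h

section DirichletPotential

variable {κ η a t : ℝ} (x : ℝ)

theorem MeasureTheory.Integrable.dirichletKer_mul {μ : Measure ℝ} (hD : 0 < κ * η) (ht : 0 < t)
    {f : ℝ → ℝ} (hf : Integrable f μ) : Integrable (fun y => dirichletKer κ η a t x y * f y) μ :=
  hf.bdd_mul (continuous_dirichletKer x).aestronglyMeasurable
    (ae_of_all _ (abs_dirichletKer_le x hD ht))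

theorem MeasureTheory.Integrable.dirichletKerDyy_mul {μ : Measure ℝ} (hD : 0 < κ * η)
    (ht : 0 < t) {f : ℝ → ℝ} (hf : Integrable f μ) :
    Integrable (fun y => dirichletKerDyy κ η a t x y * f y) μ :=
  hf.bdd_mul (continuous_dirichletKerDyy x).aestronglyMeasurable
    (ae_of_all _ (abs_dirichletKerDyy_le x hD ht))

/-- For `τ > t / 2` the time derivative of the kernel is bounded uniformly in `y`, so the
differentiated integrand is dominated by a multiple of `|g|`. -/
theorem hasDerivAt_integral_dirichletKer_mul {μ : Measure ℝ} (hD : 0 < κ * η) (ht : 0 < t)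
    {g : ℝ → ℝ} (hg : Integrable g μ) :
    HasDerivAt (fun τ => ∫ y, dirichletKer κ η a τ x y * g y ∂μ)
      (∫ y, κ * η * (dirichletKerDyy κ η a t x y - a ^ 2 * dirichletKer κ η a t x y) * g y ∂μ)
      t := by
  have hs : 0 < κ * η * (t / 2) := by positivity
  set K := κ * η * (3 / (κ * η * (t / 2)) + 2 * a ^ 2) * (√(κ * η * (t / 2)))⁻¹
  have hbound : ∀ y, ∀ τ ∈ Ioi (t / 2),
      ‖κ * η * (dirichletKerDyy κ η a τ x y - a ^ 2 * dirichletKer κ η a τ x y) * g y‖ ≤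
        K * ‖g y‖ := fun y τ hτ => by
    rw [norm_mul]
    gcongr
    exact abs_dirichletKer_time_deriv_le x hD hs (by gcongr; exact hτ.le) y
  refine (hasDerivAt_integral_of_dominated_loc_of_deriv_le
    (F := fun τ y => dirichletKer κ η a τ x y * g y) (Ioi_mem_nhds (half_lt_self ht))
    (Eventually.of_forall fun τ => ((continuous_dirichletKer x).aestronglyMeasurable).mul
      hg.aestronglyMeasurable)
    (hg.dirichletKer_mul x hD ht) ?_ (ae_of_all _ hbound) (hg.norm.const_mul K)
    (ae_of_all _ fun y τ hτ => ?_)).2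
  · exact ((((continuous_dirichletKerDyy x).sub
      ((continuous_dirichletKer x).const_mul _)).const_mul _).aestronglyMeasurable).mul
      hg.aestronglyMeasurable
  · exact (hasDerivAt_dirichletKer_time x hD ((half_pos ht).trans hτ) y).mul_const (g y)

theorem integral_dirichletKerDyy_mul (hD : 0 < κ * η) (ht : 0 < t) {g g' g'' : ℝ → ℝ}
    (hg : ∀ y ∈ Ioi 0, HasDerivAt g (g' y) y) (hg' : ∀ y ∈ Ioi 0, HasDerivAt g' (g'' y) y)
    (hgc : ContinuousWithinAt g (Ici 0) 0) (hg'c : ContinuousWithinAt g' (Ici 0) 0)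
    (hg0 : g 0 = 0) (hgi : IntegrableOn g (Ioi 0)) (hg''i : IntegrableOn g'' (Ioi 0))
    (hgt : Tendsto g atTop (𝓝 0)) (hg't : Tendsto g' atTop (𝓝 0)) :
    ∫ y in Ioi 0, dirichletKerDyy κ η a t x y * g y =
      ∫ y in Ioi 0, dirichletKer κ η a t x y * g'' y := by
  refine integral_Ioi_deriv_deriv_mul_eq_mul_deriv_deriv
    (fun y _ => hasDerivAt_dirichletKer_space x y)
    (fun y _ => hasDerivAt_dirichletKerDy_space x y)
    hg hg' ?_ (dirichletKer_zero_right x) hg0 (hgi.dirichletKerDyy_mul x hD ht)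
    (hg''i.dirichletKer_mul x hD ht) ?_
  · exact (((continuous_dirichletKerDy x).continuousWithinAt.mul hgc).sub
      ((continuous_dirichletKer x).continuousWithinAt.mul hg'c))
  · have hbdd {K : ℝ → ℝ} {C : ℝ} (hK : ∀ y, |K y| ≤ C) :
        IsBoundedUnder (· ≤ ·) atTop (norm ∘ K) := isBoundedUnder_of ⟨C, hK⟩
    simpa using (isBoundedUnder_le_mul_tendsto_zero (hbdd (abs_dirichletKerDy_le x hD ht))
      hgt).sub (isBoundedUnder_le_mul_tendsto_zero (hbdd (abs_dirichletKer_le x hD ht)) hg't)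

theorem integral_dirichletKer_time_deriv_mul (hD : 0 < κ * η) (ht : 0 < t) {g g' g'' : ℝ → ℝ}
    (hg : ∀ y ∈ Ioi 0, HasDerivAt g (g' y) y) (hg' : ∀ y ∈ Ioi 0, HasDerivAt g' (g'' y) y)
    (hgc : ContinuousWithinAt g (Ici 0) 0) (hg'c : ContinuousWithinAt g' (Ici 0) 0)
    (hg0 : g 0 = 0) (hgi : IntegrableOn g (Ioi 0)) (hg''i : IntegrableOn g'' (Ioi 0))
    (hgt : Tendsto g atTop (𝓝 0)) (hg't : Tendsto g' atTop (𝓝 0)) :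
    ∫ y in Ioi 0, κ * η * (dirichletKerDyy κ η a t x y - a ^ 2 * dirichletKer κ η a t x y) * g y =
      ∫ y in Ioi 0, dirichletKer κ η a t x y * (κ * η * (g'' y - a ^ 2 * g y)) := by
  have hIyy := (hgi.dirichletKerDyy_mul x hD ht (a := a)).const_mul (κ * η)
  have hI := (hgi.dirichletKer_mul x hD ht (a := a)).const_mul (κ * η * a ^ 2)
  have hI'' := (hg''i.dirichletKer_mul x hD ht (a := a)).const_mul (κ * η)
  calc _ = ∫ y in Ioi 0, κ * η * (dirichletKerDyy κ η a t x y * g y) -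
          κ * η * a ^ 2 * (dirichletKer κ η a t x y * g y) := by
        congr 1; ext y; ring
    _ = (κ * η * ∫ y in Ioi 0, dirichletKer κ η a t x y * g'' y) -
          κ * η * a ^ 2 * ∫ y in Ioi 0, dirichletKer κ η a t x y * g y := by
        rw [integral_sub hIyy hI, integral_const_mul, integral_const_mul,
          integral_dirichletKerDyy_mul x hD ht hg hg' hgc hg'c hg0 hgi hg''i hgt hg't]
    _ = ∫ y in Ioi 0, dirichletKer κ η a t x y * (κ * η * (g'' y - a ^ 2 * g y)) := by
        rw [← integral_const_mul, ← integral_const_mul, ← integral_sub hI'' hI]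
        congr 1; ext y; ring

end DirichletPotential

section ExponentialDecay

variable {f : ℝ → ℝ} {M c : ℝ}

theorem isBigO_exp_neg_of_abs_le (hf : ∀ y ≥ (0 : ℝ), |f y| ≤ M * exp (-c * y)) :
    f =O[atTop] fun y => exp (-c * y) :=
  .of_bound M <| (eventually_ge_atTop 0).mono fun y hy => by
    simpa [abs_of_pos (exp_pos _)] using hf y hy

theorem integrableOn_Ioi_of_abs_le_mul_exp_neg (hc : 0 < c) (hcont : ContinuousOn f (Ici 0))
    (hf : ∀ y ≥ (0 : ℝ), |f y| ≤ M * exp (-c * y)) : IntegrableOn f (Ioi 0) :=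
  integrable_of_isBigO_exp_neg hc hcont (isBigO_exp_neg_of_abs_le hf)

theorem tendsto_zero_of_abs_le_mul_exp_neg (hc : 0 < c)
    (hf : ∀ y ≥ (0 : ℝ), |f y| ≤ M * exp (-c * y)) : Tendsto f atTop (𝓝 0) :=
  (isBigO_exp_neg_of_abs_le hf).trans_tendsto
    (tendsto_exp_atBot.comp (tendsto_id.const_mul_atTop_of_neg (neg_neg_iff_pos.2 hc)))

end ExponentialDecay

theorem ContDiffOn.hasDerivAt_derivWithin_Ici {f : ℝ → ℝ} {n : WithTop ℕ∞} {b y : ℝ}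
    (hf : ContDiffOn ℝ n f (Ici b)) (hn : n ≠ 0) (hy : b < y) :
    HasDerivAt f (derivWithin f (Ici b) y) y :=
  (hf.differentiableOn hn y hy.le).hasDerivWithinAt.hasDerivAt (Ici_mem_nhds hy)

theorem dirichlet_potential_time_deriv_general (κ η : ℝ) (hκ : 0 < κ) (hη : 0 < η)
    (a : ℝ) (g : ℝ → ℝ)
    (hg : ContDiffOn ℝ 2 g (Ici 0)) (hg0 : g 0 = 0)
    (M c : ℝ) (hc : 0 < c)
    (hbd : ∀ y ≥ (0 : ℝ),
      |g y| + |derivWithin g (Ici 0) y| +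
          |derivWithin (derivWithin g (Ici 0)) (Ici 0) y| ≤ M * Real.exp (-c * y)) :
    ∀ t > (0 : ℝ), ∀ x > (0 : ℝ),
      deriv (fun τ => ∫ y in Ioi (0 : ℝ), dirichletKer κ η a τ x y * g y) t =
        ∫ y in Ioi (0 : ℝ),
          dirichletKer κ η a t x y *
            (κ * η * (derivWithin (derivWithin g (Ici 0)) (Ici 0) y - a ^ 2 * g y)) := by
  intro t ht x _
  have hD : 0 < κ * η := mul_pos hκ hη
  set g₁ := derivWithin g (Ici 0)
  set g₂ := derivWithin g₁ (Ici 0)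
  have hg₁ : ContDiffOn ℝ 1 g₁ (Ici 0) := hg.derivWithin (uniqueDiffOn_Ici 0) le_rfl
  have hg₂ : ContinuousOn g₂ (Ici 0) := hg₁.continuousOn_derivWithin (uniqueDiffOn_Ici 0) le_rfl
  have hbd₀ (y) (hy : y ≥ 0) : |g y| ≤ M * exp (-c * y) := by
    linarith [hbd y hy, abs_nonneg (g₁ y), abs_nonneg (g₂ y)]
  have hbd₁ (y) (hy : y ≥ 0) : |g₁ y| ≤ M * exp (-c * y) := by
    linarith [hbd y hy, abs_nonneg (g y), abs_nonneg (g₂ y)]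
  have hbd₂ (y) (hy : y ≥ 0) : |g₂ y| ≤ M * exp (-c * y) := by
    linarith [hbd y hy, abs_nonneg (g y), abs_nonneg (g₁ y)]
  have hgi := integrableOn_Ioi_of_abs_le_mul_exp_neg hc hg.continuousOn hbd₀
  rw [(hasDerivAt_integral_dirichletKer_mul x hD ht hgi).deriv]
  exact integral_dirichletKer_time_deriv_mul x hD ht
    (fun y hy => hg.hasDerivAt_derivWithin_Ici two_ne_zero hy)
    (fun y hy => hg₁.hasDerivAt_derivWithin_Ici one_ne_zero hy)
    (hg.continuousOn 0 self_mem_Ici) (hg₁.continuousOn 0 self_mem_Ici) hg0 hgi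
    (integrableOn_Ioi_of_abs_le_mul_exp_neg hc hg₂ hbd₂)
    (tendsto_zero_of_abs_le_mul_exp_neg hc hbd₀) (tendsto_zero_of_abs_le_mul_exp_neg hc hbd₁)

/-- Time derivative of the Dirichlet heat potential under the compatibility condition
(absence of an initial layer): if `g ∈ C²([0,∞))` with `g(0) = 0` and
`|g| + |g′| + |g″| ≤ M e^{−cy}`, then for `t > 0`, `x > 0`,
`∂_t ∫₀^∞ G_D(t,x,y) g(y) dy = ∫₀^∞ G_D(t,x,y) κη (g″(y) − a² g(y)) dy`. -/
theorem dirichlet_potential_time_deriv (κ η : ℝ) (hκ : 0 < κ) (hη : 0 < η)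
    (a : ℝ) (ha : 0 ≤ a) (g : ℝ → ℝ)
    (hg : ContDiffOn ℝ 2 g (Ici 0)) (hg0 : g 0 = 0)
    (M c : ℝ) (hM : 0 < M) (hc : 0 < c)
    (hbd : ∀ y ≥ (0 : ℝ),
      |g y| + |derivWithin g (Ici 0) y| +
          |derivWithin (derivWithin g (Ici 0)) (Ici 0) y| ≤ M * Real.exp (-c * y)) :
    ∀ t > (0 : ℝ), ∀ x > (0 : ℝ),
      deriv (fun τ => ∫ y in Ioi (0 : ℝ), dirichletKer κ η a τ x y * g y) t =
        ∫ y in Ioi (0 : ℝ),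
          dirichletKer κ η a t x y *
            (κ * η * (derivWithin (derivWithin g (Ici 0)) (Ici 0) y - a ^ 2 * g y)) :=
  dirichlet_potential_time_deriv_general κ η hκ hη a g hg hg0 M c hc hbd
end
end
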